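/- arXiv:1508.06333 — 2 statements merged into one kernel-verified Lean document; each statement's English description precedes it below -/
import Mathlib

section
/- The function f(α) = (1/2 − 2α)·tan(α/2) on the interval [0, 1/4] attains a maximum value strictly greater than 0.0156. -/
open Real Set

lemma continuousOn_tan_half_Icc {a b : ℝ} (ha : -π < a) (hb : b < π) :
    ContinuousOn (fun x => tan (x / 2)) (Icc a b) :=
  continuousOn_tan_Ioo.comp (by fun_prop) fun x hx =>
    ⟨by linarith [hx.1], by linarith [hx.2]⟩

lemma continuousOn_zigzag :
    ContinuousOn (fun β : ℝ => (1 / 2 - 2 * β) * tan (β / 2)) (Icc 0 (1 / 4)) :=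
  (continuousOn_const.sub (continuousOn_const.mul continuousOn_id)).mul
    (continuousOn_tan_half_Icc (by linarith [pi_pos]) (by linarith [pi_gt_three]))

-- `tan x > x` at `x = 1/16` gives `1/4 · tan (1/16) > 1/64 = 0.015625`.
lemma zigzag_one_eighth_gt : (0.0156 : ℝ) < (1 / 2 - 2 * (1 / 8)) * tan ((1 / 8) / 2) := by
  have htan : (1 / 16 : ℝ) < tan (1 / 16) := lt_tan (by norm_num) (by linarith [pi_gt_three])
  norm_num
  linarith

/-- The function `f(α) = (1/2 − 2α)·tan(α/2)` attains on `[0, 1/4]` a maximum value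
strictly greater than `0.0156`. -/
theorem stmt6 : ∃ α ∈ Set.Icc (0 : ℝ) (1 / 4),
    (∀ β ∈ Set.Icc (0 : ℝ) (1 / 4),
        (1 / 2 - 2 * β) * Real.tan (β / 2) ≤ (1 / 2 - 2 * α) * Real.tan (α / 2)) ∧
      (0.0156 : ℝ) < (1 / 2 - 2 * α) * Real.tan (α / 2) := by
  obtain ⟨α, hα, hmax⟩ := isCompact_Icc.exists_isMaxOn (nonempty_Icc.2 (by norm_num))
    continuousOn_zigzag
  refine ⟨α, hα, fun β hβ => hmax hβ, ?_⟩
  exact zigzag_one_eighth_gt.trans_le (hmax (show (1 / 8 : ℝ) ∈ Icc 0 (1 / 4) by norm_num))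
end

section
/- There exists k ∈ (0.05, 0.06) and α ∈ (0, π/2) such that (1 − k − 2α)·tan(α/2) = k and α maximizes α' ↦ (1 − k − 2α')·tan(α'/2) over [0, (1−k)/2]. In particular, with k = 0.056 and α = 0.2371, one has |(1 − k − 2α)·tan(α/2) − k| < 0.001. -/
/-!
The maximal progress `M k = max_{α ∈ [0, 1/2]} (1 - k - 2α)·tan(α/2)` depends continuously
on `k` (it is the supremum of a jointly continuous family over a compact set).  The elementary
bounds `x ≤ tan x ≤ x / (1 - x²/2)` give `M 0.05 > 0.05` and `M 0.06 < 0.06`, so the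
intermediate value theorem yields a fixed point `M k = k`, and a maximiser `α` exists by
compactness.
-/

open Real Set

noncomputable def zigzagProgress (k α : ℝ) : ℝ := (1 - k - 2 * α) * tan (α / 2)

noncomputable def maxZigzagProgress (k : ℝ) : ℝ := sSup (zigzagProgress k '' Icc 0 (1 / 2))

lemma tan_mul_one_sub_sq_div_two_le {x : ℝ} (h0 : 0 ≤ x) (h1 : x < π / 2) :
    tan x * (1 - x ^ 2 / 2) ≤ x := by
  have hcos : 0 < cos x := cos_pos_of_mem_Ioo ⟨by linarith [pi_pos], h1⟩
  calc tan x * (1 - x ^ 2 / 2) ≤ tan x * cos x :=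
        mul_le_mul_of_nonneg_left one_sub_sq_div_two_le_cos
          (tan_nonneg_of_nonneg_of_le_pi_div_two h0 h1.le)
    _ = sin x := tan_mul_cos hcos.ne'
    _ ≤ x := sin_le h0

lemma continuousOn_tan_half : ContinuousOn (fun α : ℝ => tan (α / 2)) (Ioo (-π) π) :=
  continuousOn_tan_Ioo.comp (by fun_prop)
    fun α hα => ⟨by linarith [hα.1], by linarith [hα.2]⟩

lemma Icc_zero_half_subset_Ioo_neg_pi_pi : Icc (0 : ℝ) (1 / 2) ⊆ Ioo (-π) π :=
  fun α hα => ⟨by linarith [hα.1, pi_pos], by linarith [hα.2, pi_gt_three]⟩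

lemma continuousOn_zigzagProgress (k : ℝ) :
    ContinuousOn (zigzagProgress k) (Icc 0 (1 / 2)) :=
  (continuous_const.sub (continuous_const.mul continuous_id)).continuousOn.mul
    (continuousOn_tan_half.mono Icc_zero_half_subset_Ioo_neg_pi_pi)

lemma continuous_maxZigzagProgress : Continuous maxZigzagProgress := by
  let f : ℝ → Icc (0 : ℝ) (1 / 2) → ℝ := fun k α => zigzagProgress k α
  have hf : Continuous ↿f :=
    (by fun_prop : Continuous fun p : ℝ × Icc (0 : ℝ) (1 / 2) => 1 - p.1 - 2 * (p.2 : ℝ)).mul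
      (continuousOn_tan_half.comp_continuous (by fun_prop)
        fun p => Icc_zero_half_subset_Ioo_neg_pi_pi p.2.2)
  have hM : maxZigzagProgress = fun k => sSup (f k '' univ) := by
    ext k
    rw [image_univ, ← image_eq_range]
    rfl
  rw [hM]
  exact isCompact_univ.continuous_sSup hf

lemma exists_zigzagProgress_eq_maxZigzagProgress (k : ℝ) :
    ∃ α ∈ Icc (0 : ℝ) (1 / 2), maxZigzagProgress k = zigzagProgress k α ∧
      ∀ α' ∈ Icc (0 : ℝ) (1 / 2), zigzagProgress k α' ≤ zigzagProgress k α :=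
  isCompact_Icc.exists_sSup_image_eq_and_ge (nonempty_Icc.mpr (by norm_num))
    (continuousOn_zigzagProgress k)

lemma lt_maxZigzagProgress_five_hundredths : 0.05 < maxZigzagProgress 0.05 := by
  have hmem : (0.2371 : ℝ) ∈ Icc 0 (1 / 2) := by norm_num
  have hle : zigzagProgress 0.05 0.2371 ≤ maxZigzagProgress 0.05 :=
    le_csSup (isCompact_Icc.bddAbove_image (continuousOn_zigzagProgress _))
      (mem_image_of_mem _ hmem)
  have htan : 0.2371 / 2 ≤ tan (0.2371 / 2) := le_tan (by norm_num) (by linarith [pi_gt_three])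
  have : (0.05 : ℝ) < zigzagProgress 0.05 0.2371 := by
    unfold zigzagProgress
    nlinarith
  linarith

lemma maxZigzagProgress_six_hundredths_lt : maxZigzagProgress 0.06 < 0.06 := by
  suffices maxZigzagProgress 0.06 ≤ 0.059 by linarith
  refine csSup_le ((nonempty_Icc.mpr (by norm_num)).image _) ?_
  rintro _ ⟨α, hα, rfl⟩
  have hα2 : α / 2 < π / 2 := by linarith [hα.2, pi_gt_three]
  have htan_nonneg : 0 ≤ tan (α / 2) :=
    tan_nonneg_of_nonneg_of_le_pi_div_two (by linarith [hα.1]) hα2.le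
  have htan_le := tan_mul_one_sub_sq_div_two_le (by linarith [hα.1]) hα2
  -- on `[0, 1/4]`, `1 - x²/2 ≥ 31/32`, so `tan x ≤ 32x/31`
  have htan_lin : tan (α / 2) ≤ 32 / 31 * (α / 2) := by
    have hsq : (0 : ℝ) ≤ 1 / 16 - (α / 2) ^ 2 := by nlinarith [hα.1, hα.2]
    nlinarith [mul_nonneg htan_nonneg hsq]
  unfold zigzagProgress
  rcases le_or_gt (1 - 0.06 - 2 * α) 0 with hneg | hpos
  · nlinarith
  · nlinarith [sq_nonneg (α - 0.235)]

lemma exists_maxZigzagProgress_eq_self :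
    ∃ k ∈ Ioo (0.05 : ℝ) 0.06, maxZigzagProgress k = k := by
  have hsign : (0 : ℝ) ∈ Ioo (maxZigzagProgress 0.06 - 0.06) (maxZigzagProgress 0.05 - 0.05) :=
    ⟨by linarith [maxZigzagProgress_six_hundredths_lt],
      by linarith [lt_maxZigzagProgress_five_hundredths]⟩
  obtain ⟨k, hk, hfix⟩ := intermediate_value_Ioo' (by norm_num : (0.05 : ℝ) ≤ 0.06)
    (continuous_maxZigzagProgress.sub continuous_id).continuousOn hsign
  exact ⟨k, hk, sub_eq_zero.mp hfix⟩

lemma abs_zigzagProgress_sub_lt : |zigzagProgress 0.056 0.2371 - 0.056| < 0.001 := by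
  have hx : (0.2371 / 2 : ℝ) < π / 2 := by linarith [pi_gt_three]
  have hlow := le_tan (by norm_num) hx
  have hup := tan_mul_one_sub_sq_div_two_le (by norm_num) hx
  unfold zigzagProgress
  rw [abs_lt]
  constructor <;> nlinarith

/-- There is a threshold `k ∈ (0.05, 0.06)` and an angle `α ∈ (0, π/2)` such that the
maximal zig-zag vertical progress `(1 − k − 2α)·tan(α/2)` equals `k`, with `α` maximizing
`α' ↦ (1 − k − 2α')·tan(α'/2)` over `[0, (1−k)/2]`.  In particular with `k = 0.056` and
`α = 0.2371` the fixed-point equation holds to within `0.001`. -/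
theorem stmt11 :
    (∃ k ∈ Set.Ioo (0.05 : ℝ) 0.06, ∃ α ∈ Set.Ioo (0 : ℝ) (Real.pi / 2),
      (1 - k - 2 * α) * Real.tan (α / 2) = k ∧
      ∀ α' ∈ Set.Icc (0 : ℝ) ((1 - k) / 2),
        (1 - k - 2 * α') * Real.tan (α' / 2) ≤ (1 - k - 2 * α) * Real.tan (α / 2)) ∧
    |(1 - 0.056 - 2 * 0.2371) * Real.tan (0.2371 / 2) - 0.056| < (0.001 : ℝ) := by
  refine ⟨?_, abs_zigzagProgress_sub_lt⟩
  obtain ⟨k, hk, hfix⟩ := exists_maxZigzagProgress_eq_self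
  obtain ⟨α, hα, hmax, hge⟩ := exists_zigzagProgress_eq_maxZigzagProgress k
  have hval : zigzagProgress k α = k := hmax.symm.trans hfix
  have hα_pos : 0 < α := by
    refine hα.1.lt_of_ne fun h => ?_
    rw [← h, zigzagProgress] at hval
    norm_num at hval
    linarith [hk.1]
  refine ⟨k, hk, α, ⟨hα_pos, by linarith [hα.2, pi_gt_three]⟩, hval, fun α' hα' => ?_⟩
  exact hge α' ⟨hα'.1, by linarith [hα'.2, hk.1]⟩
end
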